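/- arXiv:1405.5900 — 2 statements merged into one kernel-verified Lean document; each statement's English description precedes it below -/
import Mathlib

section
/- Let n ≥ k ≥ 1, let a_1, …, a_n be nonzero real numbers, c_1, …, c_n arbitrary real numbers, and fix an index i ∈ {1,…,n}. Then Σ_{(j_1,…,j_k)∈I_{k,i}} c_{j_1}⋯c_{j_k} · V(a_{j_1},…,a_{j_k},a_i) · a_{j_1}¹ a_{j_2}² ⋯ a_{j_k}^k = (−1)^k · Σ_{(j_1,…,j_k)∈I_k^+} c_{j_1}⋯c_{j_k} · a_{j_1}² ⋯ a_{j_k}² · V(a_{j_1},…,a_{j_k})² · ∏_{l=1}^k (1 − a_i/a_{j_l}), where I_{k,i} is the set of k-tuples of pairwise distinct indices from {1,…,n} all different from i and I_k^+ is the set of strictly decreasing k-tuples n ≥ j_1 > … > j_k ≥ 1. -/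
/-!
Every injective `k`-tuple of indices is uniquely a strictly decreasing tuple `t` composed
with a permutation `σ`. For fixed `t`, with `y = a ∘ t` and `b = a i`, the Vandermonde factor
is `V(y ∘ σ, b) = sign σ · V(y) · ∏ (b - y_l)`, and the signed sum `∑ sign σ ∏ y_{σ l}^{l+1}`
is the determinant `det (y_p^{q+1}) = ∏ y_l · V(y)`. So `t` contributes
`V(y)² ∏ y_l ∏ (b - y_l) = (-1)^k ∏ y_l² V(y)² ∏ (1 - b / y_l)`. Decreasing tuples through `i`
contribute `0` on the right.
-/

open Finset

/-- Vandermonde product V(x_1,…,x_m) = ∏_{q<r} (x_r − x_q). -/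
def vand {m : ℕ} (x : Fin m → ℝ) : ℝ :=
  ∏ r : Fin m, ∏ q ∈ Finset.univ.filter (fun q => q < r), (x r - x q)

section StrictAntiPerm

variable {α : Type*} [LinearOrder α] {k : ℕ}

theorem StrictAnti.comp_perm_injective {t₁ t₂ : Fin k → α} (h₁ : StrictAnti t₁)
    (h₂ : StrictAnti t₂) {σ₁ σ₂ : Equiv.Perm (Fin k)} (h : t₁ ∘ σ₁ = t₂ ∘ σ₂) :
    t₁ = t₂ ∧ σ₁ = σ₂ := by
  have ht : t₁ = t₂ := by
    rw [← h₁.range_inj h₂, ← σ₁.surjective.range_comp, h,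
      σ₂.surjective.range_comp]
  subst ht
  exact ⟨rfl, Equiv.ext fun l => h₁.injective (congrFun h l)⟩

theorem Function.Injective.exists_strictAnti_comp_perm {j : Fin k → α}
    (hj : Function.Injective j) :
    ∃ t : Fin k → α, StrictAnti t ∧ ∃ σ : Equiv.Perm (Fin k), t ∘ σ = j := by
  set τ := Tuple.sort j
  have hmono : StrictMono (j ∘ τ) :=
    (Tuple.monotone_sort j).strictMono_of_injective (hj.comp τ.injective)
  refine ⟨j ∘ τ ∘ Fin.rev, fun p q hpq => hmono (Fin.rev_lt_rev.mpr hpq),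
    τ.symm.trans Fin.revPerm, ?_⟩
  funext l
  simp

theorem sum_injective_eq_sum_strictAnti_sum_perm {M : Type*} [Fintype α] [DecidableEq α]
    [AddCommMonoid M] (p : α → Prop) [DecidablePred p] (f : (Fin k → α) → M) :
    ∑ j ∈ univ.filter (fun j : Fin k → α => Function.Injective j ∧ ∀ l, p (j l)), f j
      = ∑ t ∈ univ.filter (fun t : Fin k → α => StrictAnti t ∧ ∀ l, p (t l)),
          ∑ σ : Equiv.Perm (Fin k), f (t ∘ σ) := by
  rw [← sum_product']
  symm
  apply sum_bij (fun x _ => x.1 ∘ x.2)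
  · rintro ⟨t, σ⟩ hx
    simp only [mem_product, mem_filter, mem_univ, true_and, and_true] at hx ⊢
    exact ⟨hx.1.injective.comp σ.injective, fun l => hx.2 (σ l)⟩
  · rintro ⟨t₁, σ₁⟩ hx₁ ⟨t₂, σ₂⟩ hx₂ h
    simp only [mem_product, mem_filter, mem_univ, true_and, and_true] at hx₁ hx₂
    obtain ⟨rfl, rfl⟩ := hx₁.1.comp_perm_injective hx₂.1 h
    rfl
  · intro j hj
    simp only [mem_filter, mem_univ, true_and] at hj
    obtain ⟨t, ht, σ, rfl⟩ := hj.1.exists_strictAnti_comp_perm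
    refine ⟨(t, σ), ?_, rfl⟩
    simp only [mem_product, mem_filter, mem_univ, true_and, and_true]
    exact ⟨ht, fun l => by simpa using hj.2 (σ.symm l)⟩
  · intro _ _
    rfl

end StrictAntiPerm

theorem vand_eq_det {m : ℕ} (x : Fin m → ℝ) : vand x = (Matrix.vandermonde x).det := by
  rw [Matrix.det_vandermonde, vand, prod_comm' (t' := univ) (s' := fun q => Ioi q)]
  intro q r
  simp

theorem vand_comp_perm {m : ℕ} (x : Fin m → ℝ) (σ : Equiv.Perm (Fin m)) :
    vand (x ∘ σ) = Equiv.Perm.sign σ * vand x := by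
  rw [vand_eq_det, vand_eq_det, ← Matrix.det_permute]
  rfl

theorem vand_snoc {m : ℕ} (x : Fin m → ℝ) (b : ℝ) :
    vand (Fin.snoc x b) = vand x * ∏ l, (b - x l) := by
  simp only [vand, prod_filter, Fin.prod_univ_castSucc, Fin.snoc_castSucc, Fin.snoc_last,
    Fin.castSucc_lt_castSucc_iff, Fin.castSucc_lt_last, if_true, lt_irrefl, if_false, mul_one,
    (Fin.castSucc_lt_last _).not_gt]

theorem sum_sign_mul_prod_pow_succ {k : ℕ} (y : Fin k → ℝ) :
    ∑ σ : Equiv.Perm (Fin k), Equiv.Perm.sign σ * ∏ l, y (σ l) ^ ((l : ℕ) + 1)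
      = (∏ l, y l) * vand y := by
  have hM : Matrix.of (fun p q : Fin k => y p ^ ((q : ℕ) + 1))
      = Matrix.diagonal y * Matrix.vandermonde y := by
    ext p q
    simp [Matrix.vandermonde, pow_succ, mul_comm]
  rw [vand_eq_det, ← Matrix.det_diagonal, ← Matrix.det_mul, ← hM, Matrix.det_apply]
  simp [Units.smul_def, zsmul_eq_mul]

theorem sum_perm_vand_snoc_mul_prod_pow_succ {k : ℕ} (y : Fin k → ℝ) (b : ℝ) :
    ∑ σ : Equiv.Perm (Fin k), vand (Fin.snoc (y ∘ σ) b) * ∏ l, y (σ l) ^ ((l : ℕ) + 1)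
      = vand y ^ 2 * ((∏ l, y l) * ∏ l, (b - y l)) := by
  have hterm : ∀ σ : Equiv.Perm (Fin k),
      vand (Fin.snoc (y ∘ σ) b) * ∏ l, y (σ l) ^ ((l : ℕ) + 1)
        = (vand y * ∏ l, (b - y l)) *
            (Equiv.Perm.sign σ * ∏ l, y (σ l) ^ ((l : ℕ) + 1)) := by
    intro σ
    rw [vand_snoc, vand_comp_perm, Function.comp_def, Equiv.prod_comp σ (fun l => b - y l)]
    ring
  rw [sum_congr rfl fun σ _ => hterm σ, ← mul_sum, sum_sign_mul_prod_pow_succ]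
  ring

theorem prod_mul_prod_sub_eq {K : Type*} [Field K] {k : ℕ} (y : Fin k → K) (b : K)
    (hy : ∀ l, y l ≠ 0) :
    (∏ l, y l) * ∏ l, (b - y l) = (-1) ^ k * (∏ l, y l ^ 2) * ∏ l, (1 - b / y l) := by
  calc (∏ l, y l) * ∏ l, (b - y l) = ∏ l, (-1) * y l ^ 2 * (1 - b / y l) := by
        rw [← prod_mul_distrib]
        refine prod_congr rfl fun l _ => ?_
        field_simp [hy l]
        ring
    _ = _ := by rw [prod_mul_distrib, prod_mul_distrib, prod_const, card_univ, Fintype.card_fin]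

open Classical in
theorem stmt7_general {n : ℕ} (k : ℕ)
    (a c : Fin n → ℝ) (ha : ∀ j, a j ≠ 0) (i : Fin n) :
    ∑ j ∈ Finset.univ.filter
        (fun j : Fin k → Fin n => Function.Injective j ∧ ∀ l, j l ≠ i),
        (∏ l, c (j l)) * vand (Fin.snoc (fun l => a (j l)) (a i)) *
          ∏ l, a (j l) ^ ((l : ℕ) + 1)
      = (-1 : ℝ) ^ k *
          ∑ j ∈ Finset.univ.filter (fun j : Fin k → Fin n => StrictAnti j),
            (∏ l, c (j l)) * (∏ l, a (j l) ^ 2) * vand (fun l => a (j l)) ^ 2 *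
              ∏ l, (1 - a i / a (j l)) := by
  -- a decreasing tuple through `i` contributes the factor `1 - a i / a i = 0`
  have hthrough : ∑ j ∈ Finset.univ.filter (fun j : Fin k → Fin n => StrictAnti j),
        (∏ l, c (j l)) * (∏ l, a (j l) ^ 2) * vand (fun l => a (j l)) ^ 2 *
          ∏ l, (1 - a i / a (j l))
      = ∑ j ∈ Finset.univ.filter (fun j : Fin k → Fin n => StrictAnti j ∧ ∀ l, j l ≠ i),
        (∏ l, c (j l)) * (∏ l, a (j l) ^ 2) * vand (fun l => a (j l)) ^ 2 *
          ∏ l, (1 - a i / a (j l)) := by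
    rw [← filter_filter]
    refine (sum_filter_of_ne fun j _ hj l hl => hj ?_).symm
    exact mul_eq_zero_of_right _ (prod_eq_zero (mem_univ l) (by rw [hl, div_self (ha i), sub_self]))
  rw [sum_injective_eq_sum_strictAnti_sum_perm (· ≠ i), hthrough, mul_sum]
  refine sum_congr rfl fun t _ => ?_
  calc _ = (∏ l, c (t l)) * ∑ σ : Equiv.Perm (Fin k),
        vand (Fin.snoc ((fun l => a (t l)) ∘ σ) (a i)) *
          ∏ l, a (t (σ l)) ^ ((l : ℕ) + 1) := by
        rw [mul_sum]
        refine sum_congr rfl fun σ _ => ?_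
        rw [Function.comp_def, Equiv.prod_comp σ (fun l => c (t l)), mul_assoc]
        rfl
    _ = _ := by
        rw [sum_perm_vand_snoc_mul_prod_pow_succ, prod_mul_prod_sub_eq _ _ fun l => ha (t l)]
        ring

open Classical in
/-- for nonzero a's and a fixed index i,
Σ_{(j_1,…,j_k)∈I_{k,i}} c_{j_1}⋯c_{j_k} V(a_{j_1},…,a_{j_k},a_i) a_{j_1}¹ a_{j_2}² ⋯ a_{j_k}^k
= (−1)^k Σ_{(j_1,…,j_k)∈I_k^+} c_{j_1}⋯c_{j_k} a_{j_1}²⋯a_{j_k}² V(a_{j_1},…,a_{j_k})²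
∏_{l=1}^k (1 − a_i/a_{j_l}). -/
theorem stmt7 {n : ℕ} (k : ℕ) (hk1 : 1 ≤ k) (hkn : k ≤ n)
    (a c : Fin n → ℝ) (ha : ∀ j, a j ≠ 0) (i : Fin n) :
    ∑ j ∈ Finset.univ.filter
        (fun j : Fin k → Fin n => Function.Injective j ∧ ∀ l, j l ≠ i),
        (∏ l, c (j l)) * vand (Fin.snoc (fun l => a (j l)) (a i)) *
          ∏ l, a (j l) ^ ((l : ℕ) + 1)
      = (-1 : ℝ) ^ k *
          ∑ j ∈ Finset.univ.filter (fun j : Fin k → Fin n => StrictAnti j),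
            (∏ l, c (j l)) * (∏ l, a (j l) ^ 2) * vand (fun l => a (j l)) ^ 2 *
              ∏ l, (1 - a i / a (j l)) :=
  stmt7_general k a c ha i
end

section
/- For every 1 ≤ k < n, the PLS filter factor in the direction of the largest eigenvalue satisfies f_1^k > 1 if k is odd and f_1^k < 1 if k is even, where f_1^k = 1 − Q̂_k(λ_1); equivalently Q̂_k(λ_1) < 0 when k is odd and Q̂_k(λ_1) > 0 when k is even. -/
/-!
In the eigenbasis of `M = X Xᵀ` one has `‖Q(M) Y‖² = ∑ p̂ᵢ² Q(λᵢ)²`, so the minimiser `Q̂_k` is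
orthogonal, for the discrete measure `∑ p̂ᵢ² δ_{λᵢ}`, to every `R` of degree `≤ k` with `R(0) = 0`.
If `Q̂_k` changed sign at fewer than `k` points of `(0, λ₁)`, then for `R = X ∏ (X - θ)` over these
points `Q̂_k R` would have constant sign at the nodes, forcing `Q̂_k` to vanish at all `n > k`
nodes. Hence `Q̂_k` has `k` distinct roots `θ` in `(0, λ₁)`, so `Q̂_k(x) = ∏ (1 - x / θ)` and
`Q̂_k(λ₁)` has the sign of `(-1)^k`.
-/

open Matrix Polynomial

theorem sum_mul_eq_zero_of_forall_sum_sq_le {ι K : Type*} [Fintype ι] [Field K] [LinearOrder K]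
    [IsStrictOrderedRing K] {a b : ι → K}
    (h : ∀ t : K, ∑ i, a i ^ 2 ≤ ∑ i, (a i + t * b i) ^ 2) : ∑ i, a i * b i = 0 := by
  have hquad : ∀ t : K, 0 ≤ (∑ i, b i ^ 2) * (t * t) + 2 * (∑ i, a i * b i) * t + 0 := fun t => by
    have hexpand : ∑ i, (a i + t * b i) ^ 2 =
        ∑ i, a i ^ 2 + ((∑ i, b i ^ 2) * (t * t) + 2 * (∑ i, a i * b i) * t) := by
      simp only [Finset.mul_sum, Finset.sum_mul, ← Finset.sum_add_distrib]
      exact Finset.sum_congr rfl fun i _ => by ring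
    linarith [h t]
  have := discrim_le_zero hquad
  rw [discrim] at this
  nlinarith [sq_nonneg (∑ i, a i * b i)]

theorem eq_zero_of_sum_mul_eq_zero_of_mul_nonneg {ι R : Type*} [Fintype ι] [CommRing R]
    [LinearOrder R] [IsStrictOrderedRing R] {c z : ι → R} (hc : ∀ i, 0 < c i)
    (hz : ∀ i j, 0 ≤ z i * z j) (hsum : ∑ i, c i * z i = 0) (j : ι) : z j = 0 := by
  have hsum' : ∑ i, c i * (z i * z j) = 0 := by
    simp_rw [← mul_assoc, ← Finset.sum_mul, hsum, zero_mul]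
  have := (Finset.sum_eq_zero_iff_of_nonneg fun i _ => mul_nonneg (hc i).le (hz i j)).mp hsum' j
    (Finset.mem_univ j)
  exact mul_self_eq_zero.mp ((mul_eq_zero.mp this).resolve_left (hc j).ne')

namespace Polynomial

theorem eval_mul_eval_nonneg_of_even_rootMultiplicity (f : ℝ[X]) {x y : ℝ}
    (hxy : x ≤ y) (heven : ∀ c ∈ Set.Ioo x y, Even (f.rootMultiplicity c)) :
    0 ≤ f.eval x * f.eval y := by
  induction h : f.natDegree using Nat.strong_induction_on generalizing f with
  | _ N ih =>
  by_contra! hneg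
  have hf0 : f ≠ 0 := by rintro rfl; simp at hneg
  obtain ⟨c, hc, hfc⟩ : ∃ c ∈ Set.Ioo x y, f.eval c = 0 := by
    have hcont : ContinuousOn (fun z => f.eval z) (Set.Icc x y) := f.continuous.continuousOn
    rcases mul_neg_iff.mp hneg with ⟨hx, hy⟩ | ⟨hx, hy⟩
    · exact intermediate_value_Ioo' hxy hcont ⟨hy, hx⟩
    · exact intermediate_value_Ioo hxy hcont ⟨hx, hy⟩
  obtain ⟨g, hfg⟩ := pow_rootMultiplicity_dvd f c
  have hm_pos : 0 < f.rootMultiplicity c := (rootMultiplicity_pos hf0).mpr hfc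
  have hm_even : Even (f.rootMultiplicity c) := heven c hc
  generalize f.rootMultiplicity c = m at hfg hm_pos hm_even
  have hg0 : g ≠ 0 := by rintro rfl; simp [hfg] at hf0
  have hpow_even : ∀ z, Even (((X - C c) ^ m).rootMultiplicity z) := fun z => by
    classical
    rw [← count_roots, roots_pow, roots_X_sub_C, Multiset.count_nsmul]
    exact hm_even.mul_right _
  have hg_even : ∀ z ∈ Set.Ioo x y, Even (g.rootMultiplicity z) := fun z hz => by
    have := heven z hz
    rw [hfg, rootMultiplicity_mul (hfg ▸ hf0)] at this
    exact (Nat.even_add.mp this).mp (hpow_even z)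
  have hdeg : g.natDegree < N := by
    rw [← h, hfg, natDegree_mul (pow_ne_zero _ (X_sub_C_ne_zero c)) hg0, natDegree_pow,
      natDegree_X_sub_C]
    omega
  have hfactor : f.eval x * f.eval y = ((x - c) * (y - c)) ^ m * (g.eval x * g.eval y) := by
    rw [hfg]; simp only [eval_mul, eval_pow, eval_sub, eval_X, eval_C, mul_pow]; ring
  exact hneg.not_ge (hfactor ▸ mul_nonneg (hm_even.pow_nonneg _) (ih _ hdeg g hg_even rfl))

theorem rootMultiplicity_prod_X_sub_C (T : Finset ℝ) (c : ℝ) :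
    (∏ θ ∈ T, (X - C θ)).rootMultiplicity c = if c ∈ T then 1 else 0 := by
  rw [← count_roots, roots_prod_X_sub_C, Multiset.count_eq_of_nodup T.nodup]
  rfl

open Classical in
noncomputable def signChanges (Q : ℝ[X]) (s : Set ℝ) : Finset ℝ :=
  Q.roots.toFinset.filter fun θ => θ ∈ s ∧ Odd (Q.rootMultiplicity θ)

variable {Q : ℝ[X]} {s : Set ℝ}

theorem mem_signChanges {θ : ℝ} : θ ∈ Q.signChanges s ↔ θ ∈ s ∧ Odd (Q.rootMultiplicity θ) := by
  classical
  simp only [signChanges, Finset.mem_filter, Multiset.mem_toFinset, mem_roots',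
    and_iff_right_iff_imp]
  exact fun h => rootMultiplicity_pos'.mp h.2.pos

theorem isRoot_of_mem_signChanges {θ : ℝ} (h : θ ∈ Q.signChanges s) : Q.IsRoot θ :=
  (rootMultiplicity_pos'.mp (mem_signChanges.mp h).2.pos).2

theorem even_rootMultiplicity_mul_prod_signChanges (hQ : Q ≠ 0) {c : ℝ} (hc : c ∈ s) :
    Even ((Q * ∏ θ ∈ Q.signChanges s, (X - C θ)).rootMultiplicity c) := by
  have hP : ∏ θ ∈ Q.signChanges s, (X - C θ) ≠ 0 :=
    Finset.prod_ne_zero_iff.mpr fun θ _ => X_sub_C_ne_zero θ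
  rw [rootMultiplicity_mul (mul_ne_zero hQ hP), rootMultiplicity_prod_X_sub_C]
  by_cases hodd : Odd (Q.rootMultiplicity c)
  · simpa [mem_signChanges.mpr ⟨hc, hodd⟩] using hodd.add_one
  · simpa [mem_signChanges, hc, hodd] using Nat.not_odd_iff_even.mp hodd

theorem exists_roots_mem_Ioo_of_orthogonal {ι : Type*} [Fintype ι] {x w : ι → ℝ}
    {b : ℝ} (hx : Function.Injective x) (hx0 : ∀ i, 0 < x i) (hxb : ∀ i, x i ≤ b)
    (hw : ∀ i, 0 < w i) {k : ℕ} (hQ : Q ≠ 0) (hdeg : Q.natDegree ≤ k)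
    (hk : k < Fintype.card ι)
    (horth : ∀ R : ℝ[X], R.natDegree ≤ k → R.eval 0 = 0 →
      ∑ i, w i * Q.eval (x i) * R.eval (x i) = 0) :
    ∃ T : Finset ℝ, k ≤ T.card ∧ ∀ θ ∈ T, θ ∈ Set.Ioo 0 b ∧ Q.IsRoot θ := by
  set T := Q.signChanges (Set.Ioo 0 b)
  refine ⟨T, ?_, fun θ hθ => ⟨(mem_signChanges.mp hθ).1, isRoot_of_mem_signChanges hθ⟩⟩
  by_contra! hTk
  set P := ∏ θ ∈ T, (X - C θ)
  have hP : P ≠ 0 := Finset.prod_ne_zero_iff.mpr fun θ _ => X_sub_C_ne_zero θ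
  have hsign : ∀ i j, 0 ≤ (Q * P).eval (x i) * (Q * P).eval (x j) := fun i j => by
    have heven : ∀ {l m}, ∀ c ∈ Set.Ioo (x l) (x m), Even ((Q * P).rootMultiplicity c) :=
      fun {l m} c hc => even_rootMultiplicity_mul_prod_signChanges hQ
        (Set.Ioo_subset_Ioo (hx0 l).le (hxb m) hc)
    rcases le_total (x i) (x j) with hij | hji
    · exact eval_mul_eval_nonneg_of_even_rootMultiplicity _ hij heven
    · exact mul_comm (eval (x i) _) _ ▸ eval_mul_eval_nonneg_of_even_rootMultiplicity _ hji heven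
  have hXP_deg : (X * P).natDegree ≤ k := by
    rw [natDegree_mul X_ne_zero hP, natDegree_X, natDegree_finsetProd_X_sub_C_eq_card]
    omega
  have hQP_zero : ∀ i, (Q * P).eval (x i) = 0 := by
    refine eq_zero_of_sum_mul_eq_zero_of_mul_nonneg (fun i => mul_pos (hw i) (hx0 i)) hsign ?_
    rw [← horth (X * P) hXP_deg (by simp)]
    exact Finset.sum_congr rfl fun i _ => by simp only [eval_mul, eval_X]; ring
  refine hQ (eq_zero_of_natDegree_lt_card_of_eval_eq_zero Q hx (fun i => ?_) (hdeg.trans_lt hk))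
  rcases mul_eq_zero.mp ((eval_mul ..).symm.trans (hQP_zero i)) with h | h
  · exact h
  · have hxT : x i ∈ T.val := roots_prod_X_sub_C T ▸ (mem_roots hP).mpr h
    exact isRoot_of_mem_signChanges hxT

theorem neg_one_pow_mul_eval_pos_of_roots_mem_Ioo {k : ℕ} {b : ℝ}
    (hdeg : Q.natDegree ≤ k) (h0 : Q.eval 0 = 1) {T : Finset ℝ} (hT : k ≤ T.card)
    (hroots : ∀ θ ∈ T, θ ∈ Set.Ioo 0 b ∧ Q.IsRoot θ) : 0 < (-1) ^ k * Q.eval b := by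
  have hQ : Q ≠ 0 := by rintro rfl; simp at h0
  have hTQ : T.val ≤ Q.roots :=
    (Multiset.le_iff_subset T.nodup).mpr fun θ hθ => (mem_roots hQ).mpr (hroots θ hθ).2
  have hroots_eq : Q.roots = T.val :=
    (Multiset.eq_of_le_of_card_le hTQ ((card_roots' Q).trans (hdeg.trans hT))).symm
  have hcard := card_roots' Q
  rw [hroots_eq, Finset.card_val] at hcard
  have hk : T.card = k := by omega
  have heval : ∀ z, Q.eval z = Q.leadingCoeff * ∏ θ ∈ T, (z - θ) := fun z => by
    have hsplit : Multiset.card Q.roots = Q.natDegree := by rw [hroots_eq, Finset.card_val]; omega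
    conv_lhs => rw [← C_leadingCoeff_mul_prod_multiset_X_sub_C hsplit]
    rw [eval_mul, eval_C, eval_multiset_prod, hroots_eq, Multiset.map_map]
    simp only [Function.comp_def, eval_sub, eval_X, eval_C]
    rfl
  have hsign : (-1) ^ k * ∏ θ ∈ T, (0 - θ) = ∏ θ ∈ T, θ := by
    rw [Finset.prod_congr rfl fun θ _ => zero_sub θ, Finset.prod_neg, hk, ← mul_assoc, ← pow_add,
      Even.neg_one_pow ⟨k, rfl⟩, one_mul]
  have hlc : Q.leadingCoeff ≠ 0 := leadingCoeff_ne_zero.mpr hQ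
  calc 0 < Q.leadingCoeff ^ 2 * (∏ θ ∈ T, θ) * ∏ θ ∈ T, (b - θ) := by
        refine mul_pos (mul_pos (by positivity) (Finset.prod_pos fun θ hθ => ?_))
          (Finset.prod_pos fun θ hθ => ?_)
        · exact (hroots θ hθ).1.1
        · exact sub_pos.mpr (hroots θ hθ).1.2
    _ = (-1) ^ k * Q.eval 0 * Q.eval b := by rw [heval, heval, ← hsign]; ring
    _ = (-1) ^ k * Q.eval b := by rw [h0, mul_one]

end Polynomial

theorem SemiconjBy.aeval {R A : Type*} [CommSemiring R] [Semiring A] [Algebra R A] {a x y : A}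
    (h : SemiconjBy a x y) (p : R[X]) : SemiconjBy a (aeval x p) (aeval y p) := by
  induction p using Polynomial.induction_on with
  | C r => rw [aeval_C, aeval_C]; exact (Algebra.commutes r a).symm
  | add p q hp hq => simpa only [map_add] using hp.add_right hq
  | monomial k r ih =>
    simpa only [map_mul, map_pow, aeval_X, aeval_C, pow_succ, mul_assoc] using ih.mul_right h

theorem Matrix.aeval_diagonal {ι R : Type*} [Fintype ι] [DecidableEq ι] [CommSemiring R]
    (d : ι → R) (p : R[X]) : aeval (diagonal d) p = diagonal fun i => p.eval (d i) := by
  rw [← diagonalAlgHom_apply (R := R), aeval_algHom_apply, aeval_pi_apply]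
  rfl

theorem Matrix.mulVec_dotProduct_mulVec_of_transpose_mul_eq_one {ι R : Type*} [Fintype ι]
    [DecidableEq ι] [CommSemiring R] {U : Matrix ι ι R} (hU : Uᵀ * U = 1) (v w : ι → R) :
    (U *ᵥ v) ⬝ᵥ (U *ᵥ w) = v ⬝ᵥ w := by
  rw [dotProduct_mulVec, ← mulVec_transpose, mulVec_mulVec, hU, one_mulVec]

section Orthonormal

variable {ι : Type*} [Fintype ι] [DecidableEq ι] {u : ι → ι → ℝ}

theorem Matrix.of_mul_transpose_eq_one
    (hortho : ∀ i j, u i ⬝ᵥ u j = if i = j then 1 else 0) : of u * (of u)ᵀ = 1 := by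
  ext i j
  rw [mul_apply', one_apply]
  exact hortho i j

theorem Matrix.of_mul_sum_smul_vecMulVec (hortho : ∀ i j, u i ⬝ᵥ u j = if i = j then 1 else 0)
    (lam : ι → ℝ) : of u * ∑ i, lam i • vecMulVec (u i) (u i) = diagonal lam * of u := by
  have hcol : ∀ j, of u *ᵥ u j = Pi.single j 1 := fun j => by
    ext i; simp [mulVec, hortho, Pi.single_apply]
  simp only [Finset.mul_sum, Matrix.mul_smul, mul_vecMulVec, hcol]
  ext i a
  simp [Matrix.sum_apply, vecMulVec_apply, Pi.single_apply, diagonal_mul]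

theorem sum_aeval_mulVec_mul_aeval_mulVec
    (hortho : ∀ i j, u i ⬝ᵥ u j = if i = j then 1 else 0) {lam : ι → ℝ} {M : Matrix ι ι ℝ}
    (hM : M = ∑ i, lam i • vecMulVec (u i) (u i)) (Y : ι → ℝ) (p q : ℝ[X]) :
    ∑ a, (aeval M p *ᵥ Y) a * (aeval M q *ᵥ Y) a =
      ∑ i, (u i ⬝ᵥ Y) ^ 2 * p.eval (lam i) * q.eval (lam i) := by
  have hUU := of_mul_transpose_eq_one hortho
  have hsemi : SemiconjBy (of u) M (diagonal lam) := hM ▸ of_mul_sum_smul_vecMulVec hortho lam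
  have hcoord : ∀ r : ℝ[X], of u *ᵥ (aeval M r *ᵥ Y) = fun i => r.eval (lam i) * (u i ⬝ᵥ Y) :=
    fun r => by
      rw [mulVec_mulVec, (hsemi.aeval r).eq, aeval_diagonal, ← mulVec_mulVec]
      funext i
      exact mulVec_diagonal _ _ i
  calc ∑ a, (aeval M p *ᵥ Y) a * (aeval M q *ᵥ Y) a
      = (of u *ᵥ (aeval M p *ᵥ Y)) ⬝ᵥ (of u *ᵥ (aeval M q *ᵥ Y)) :=
        (mulVec_dotProduct_mulVec_of_transpose_mul_eq_one (mul_eq_one_comm.mp hUU) _ _).symm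
    _ = ∑ i, (u i ⬝ᵥ Y) ^ 2 * p.eval (lam i) * q.eval (lam i) := by
        rw [hcoord, hcoord]
        exact Finset.sum_congr rfl fun i _ => by ring

end Orthonormal

/-- the PLS filter factor in the direction of the largest eigenvalue
λ_1 (index 0 here) satisfies f_1^k > 1 if k is odd and f_1^k < 1 if k is even,
where f_1^k = 1 − Q̂_k(λ_1). -/
theorem stmt13 {n p : ℕ} (X : Matrix (Fin n) (Fin p) ℝ) (Y : Fin n → ℝ)
    (lam : Fin n → ℝ) (u : Fin n → Fin n → ℝ)
    (hortho : ∀ i j, u i ⬝ᵥ u j = if i = j then (1 : ℝ) else 0)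
    (hspec : X * Xᵀ = ∑ i, lam i • vecMulVec (u i) (u i))
    (hanti : StrictAnti lam) (hpos : ∀ i, 0 < lam i)
    (hphat : ∀ i, u i ⬝ᵥ Y ≠ 0)
    (Qhat : ℕ → Polynomial ℝ)
    (hQmem : ∀ k, 1 ≤ k → k < n → (Qhat k).natDegree ≤ k ∧ (Qhat k).eval 0 = 1)
    (hQmin : ∀ k, 1 ≤ k → k < n → ∀ Q : Polynomial ℝ, Q.natDegree ≤ k → Q.eval 0 = 1 →
      ∑ i, (((Polynomial.aeval (X * Xᵀ)) (Qhat k) *ᵥ Y) i) ^ 2 ≤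
        ∑ i, (((Polynomial.aeval (X * Xᵀ)) Q *ᵥ Y) i) ^ 2)
    (k : ℕ) (hk1 : 1 ≤ k) (hkn : k < n) :
    (Odd k → 1 < 1 - (Qhat k).eval (lam ⟨0, by omega⟩)) ∧
      (Even k → 1 - (Qhat k).eval (lam ⟨0, by omega⟩) < 1) := by
  obtain ⟨hdeg, h0⟩ := hQmem k hk1 hkn
  have horth : ∀ R : ℝ[X], R.natDegree ≤ k → R.eval 0 = 0 →
      ∑ i, (u i ⬝ᵥ Y) ^ 2 * (Qhat k).eval (lam i) * R.eval (lam i) = 0 := fun R hR hR0 => by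
    rw [← sum_aeval_mulVec_mul_aeval_mulVec hortho hspec]
    refine sum_mul_eq_zero_of_forall_sum_sq_le fun t => ?_
    have hdeg_t : (Qhat k + t • R).natDegree ≤ k :=
      (natDegree_add_le _ _).trans (max_le hdeg ((natDegree_smul_le t R).trans hR))
    simpa [add_mulVec, smul_mulVec] using hQmin k hk1 hkn _ hdeg_t (by simp [h0, hR0])
  obtain ⟨T, hT, hroots⟩ := exists_roots_mem_Ioo_of_orthogonal (b := lam ⟨0, by omega⟩)
    hanti.injective hpos (fun i => hanti.antitone (Fin.mk_le_of_le_val (Nat.zero_le i)))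
    (fun i => pow_two_pos_of_ne_zero (hphat i))
    (fun h => by simp [h] at h0) hdeg (by simpa using hkn) horth
  have hsign := neg_one_pow_mul_eval_pos_of_roots_mem_Ioo hdeg h0 hT hroots
  constructor
  · intro hodd
    rw [hodd.neg_one_pow] at hsign
    linarith
  · intro heven
    rw [heven.neg_one_pow] at hsign
    linarith
end
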